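/- arXiv:1805.04779 — 6 statements merged into one kernel-verified Lean document; each statement's English description precedes it below -/
import Mathlib

section
/- Let T be a leaf-oriented binary tree over a linearly ordered key type α satisfying the BST property, and let k : α be a key such that the key k' of searchLeaf(T, k) satisfies k' ≠ k. Then leafKeys(ins(T, k)) = leafKeys(T) ∪ {k}, and k ∉ leafKeys(T). -/
/-!
The insert edit only replaces the leaf `k'` reached by the search with two leaves `k` and `k'`,
so the leaf keys grow by exactly `k`. Conversely, by the BST property the search for any leaf
key ends at that very leaf, so `k' ≠ k` means `k` is not a leaf key.
-/

/-- Leaf-oriented binary trees: all keys are stored in the leaves; internal nodes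
carry routing keys. -/
inductive LTree (α : Type) where
  | leaf (k : α)
  | node (k : α) (l r : LTree α)

/-- A direction (left or right child) in a binary tree. -/
inductive TDir where
  | left
  | right
  deriving DecidableEq

namespace LTree

variable {α : Type} [LinearOrder α]

/-- The set of all keys (of leaves and internal nodes) occurring in the tree. -/
def keys : LTree α → Set α
  | leaf k => {k}
  | node m l r => {m} ∪ l.keys ∪ r.keys

/-- The set of keys appearing at the leaves of the tree. -/
def leafKeys : LTree α → Set α
  | leaf k => {k}
  | node _ l r => l.leafKeys ∪ r.leafKeys

/-- The BST property for leaf-oriented trees: at every internal node `node m l r`,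
every key occurring in `l` is `< m` and every key occurring in `r` is `≥ m`. -/
def IsBST : LTree α → Prop
  | leaf _ => True
  | node m l r => (∀ x ∈ l.keys, x < m) ∧ (∀ x ∈ r.keys, m ≤ x) ∧ l.IsBST ∧ r.IsBST

/-- The list of left/right directions followed by the search for key `k`:
at `node m l r` descend left if `k < m` and right otherwise. -/
def searchDirs : LTree α → α → List TDir
  | leaf _, _ => []
  | node m l r, k =>
      if k < m then TDir.left :: l.searchDirs k else TDir.right :: r.searchDirs k

/-- The key of the leaf reached by the search for key `k`. -/
def searchKey : LTree α → α → α
  | leaf k', _ => k'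
  | node m l r, k => if k < m then l.searchKey k else r.searchKey k

/-- The subtree at a given position (list of directions), if it exists. -/
def subtreeAt? : LTree α → List TDir → Option (LTree α)
  | t, [] => some t
  | leaf _, _ :: _ => none
  | node _ l _, TDir.left :: ds => l.subtreeAt? ds
  | node _ _ r, TDir.right :: ds => r.subtreeAt? ds

/-- The insert edit: replace the leaf (with key `k'`) reached by the search for `k`
with `node (max k k') (leaf (min k k')) (leaf (max k k'))`. -/
def ins : LTree α → α → LTree α
  | leaf k', k => node (max k k') (leaf (min k k')) (leaf (max k k'))
  | node m l r, k => if k < m then node m (l.ins k) r else node m l (r.ins k)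

/-- The delete edit: letting `p` be the last internal node on the search path for `k`
and `s` the child of `p` not on the path, replace the subtree rooted at `p` by `s`.
(On a single leaf, where the search path has no internal node, this is a no-op.) -/
def del : LTree α → α → LTree α
  | leaf k', _ => leaf k'
  | node m l r, k =>
      if k < m then
        match l with
        | leaf _ => r
        | node ml ll lr => node m ((node ml ll lr).del k) r
      else
        match r with
        | leaf _ => l
        | node mr rl rr => node m l ((node mr rl rr).del k)

/-- A tree is internal iff its root is an internal node, i.e., the search path for
any key contains at least one internal node. -/
def isInternal : LTree α → Prop
  | leaf _ => False
  | node _ _ _ => True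

end LTree

namespace LTree

variable {α : Type}

theorem leafKeys_subset_keys : ∀ T : LTree α, T.leafKeys ⊆ T.keys
  | leaf _ => subset_rfl
  | node _ l r =>
      Set.union_subset_union (l.leafKeys_subset_keys.trans Set.subset_union_right)
        r.leafKeys_subset_keys

variable [LinearOrder α]

theorem searchKey_eq_of_mem_leafKeys :
    ∀ {T : LTree α}, T.IsBST → ∀ {k : α}, k ∈ T.leafKeys → T.searchKey k = k
  | leaf _, _, _, hk => hk.symm
  | node m l r, ⟨hl, hr, hbl, hbr⟩, k, hk => by
      rcases hk with hk | hk
      · have hkm : k < m := hl k (l.leafKeys_subset_keys hk)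
        simp only [searchKey, if_pos hkm, searchKey_eq_of_mem_leafKeys hbl hk]
      · have hkm : ¬k < m := not_lt.mpr (hr k (r.leafKeys_subset_keys hk))
        simp only [searchKey, if_neg hkm, searchKey_eq_of_mem_leafKeys hbr hk]

theorem leafKeys_ins : ∀ (T : LTree α) (k : α), (T.ins k).leafKeys = T.leafKeys ∪ {k}
  | leaf k', k => by
      simp only [ins, leafKeys, Set.union_singleton]
      rcases le_total k k' with h | h
      · rw [min_eq_left h, max_eq_right h, Set.pair_comm]
      · rw [min_eq_right h, max_eq_left h]
  | node m l r, k => by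
      by_cases hkm : k < m
      · simp only [ins, if_pos hkm, leafKeys, leafKeys_ins l k, Set.union_right_comm]
      · simp only [ins, if_neg hkm, leafKeys, leafKeys_ins r k, Set.union_assoc]

end LTree

/-- The insert edit adds exactly the key `k` to the set of leaf keys, and `k` was
not among the leaf keys before. -/
theorem stmt7 {α : Type} [LinearOrder α] (T : LTree α) (hT : T.IsBST) (k : α)
    (hk : T.searchKey k ≠ k) :
    (T.ins k).leafKeys = T.leafKeys ∪ {k} ∧ k ∉ T.leafKeys :=
  ⟨T.leafKeys_ins k, fun hmem => hk (LTree.searchKey_eq_of_mem_leafKeys hT hmem)⟩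
end

section
/- Let T be a leaf-oriented binary tree over a linearly ordered key type α satisfying the BST property, and let k : α be a key such that the key of searchLeaf(T, k) equals k and the search path for k in T contains at least one internal node. Then the delete edit del(T, k) also satisfies the BST property. -/
/-!
Deleting only replaces a subtree by one of its own subtrees, so the keys below every surviving
internal node can only shrink, and each routing constraint of the original tree still holds.
-/

namespace LTree

variable {α : Type} [LinearOrder α] {k m k' : α} {l r : LTree α}

theorem del_node_leaf_of_lt (h : k < m) : (node m (leaf k') r).del k = r := by
  cases r <;> simp [del, h]

theorem del_node_node_of_lt {ml : α} {ll lr : LTree α} (h : k < m) :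
    (node m (node ml ll lr) r).del k = node m ((node ml ll lr).del k) r := by
  cases r <;> simp [del, h]

theorem del_node_leaf_of_not_lt (h : ¬k < m) : (node m l (leaf k')).del k = l := by
  cases l <;> simp [del, h]

theorem del_node_node_of_not_lt {mr : α} {rl rr : LTree α} (h : ¬k < m) :
    (node m l (node mr rl rr)).del k = node m l ((node mr rl rr).del k) := by
  cases l <;> simp [del, h]

theorem keys_del_subset (T : LTree α) (k : α) : (T.del k).keys ⊆ T.keys := by
  induction T with
  | leaf _ => exact subset_rfl
  | node m l r ihl ihr =>
    by_cases h : k < m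
    · cases l with
      | leaf _ => rw [del_node_leaf_of_lt h]; exact Set.subset_union_right
      | node _ _ _ =>
        rw [del_node_node_of_lt h]
        exact Set.union_subset_union_left _ (Set.union_subset_union_right _ ihl)
    · cases r with
      | leaf _ =>
        rw [del_node_leaf_of_not_lt h]
        exact Set.subset_union_right.trans Set.subset_union_left
      | node _ _ _ =>
        rw [del_node_node_of_not_lt h]
        exact Set.union_subset_union_right _ ihr

theorem IsBST.del {T : LTree α} (hT : T.IsBST) (k : α) : (T.del k).IsBST := by
  induction T with
  | leaf _ => exact trivial
  | node m l r ihl ihr =>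
    obtain ⟨hl_lt, hr_ge, hl, hr⟩ := hT
    by_cases h : k < m
    · cases l with
      | leaf _ => rwa [del_node_leaf_of_lt h]
      | node _ _ _ =>
        rw [del_node_node_of_lt h]
        exact ⟨fun x hx => hl_lt x (keys_del_subset _ k hx), hr_ge, ihl hl, hr⟩
    · cases r with
      | leaf _ => rwa [del_node_leaf_of_not_lt h]
      | node _ _ _ =>
        rw [del_node_node_of_not_lt h]
        exact ⟨hl_lt, fun x hx => hr_ge x (keys_del_subset _ k hx), hl, ihr hr⟩

end LTree

theorem stmt8_general {α : Type} [LinearOrder α] (T : LTree α) (hT : T.IsBST) (k : α) :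
    (T.del k).IsBST :=
  hT.del k

/-- The delete edit preserves the BST property, provided the search for `k` ends at
a leaf with key `k` and the search path contains at least one internal node. -/
theorem stmt8 {α : Type} [LinearOrder α] (T : LTree α) (hT : T.IsBST) (k : α)
    (hk : T.searchKey k = k) (hint : T.isInternal) :
    (T.del k).IsBST :=
  stmt8_general T hT k
end

section
/- Let T be a leaf-oriented binary tree over a linearly ordered key type α satisfying the BST property, and let k : α be a key such that the key of searchLeaf(T, k) equals k and the search path for k in T contains at least one internal node. Then leafKeys(del(T, k)) = leafKeys(T) \ {k}. -/
/-! Deleting removes exactly one leaf, the one reached by the search for `k`, so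
`T.leafKeys = insert (T.searchKey k) (T.del k).leafKeys`. Every other leaf lies in a
subtree hanging off the search path on the side of some routing key away from `k`, so by
the BST property `k` is not a leaf key of `T.del k`. -/

namespace LTree

variable {α : Type}

theorem leafKeys_subset_keys_s9 (t : LTree α) : t.leafKeys ⊆ t.keys := by
  induction t with
  | leaf => exact subset_rfl
  | node m l r ihl ihr =>
    exact Set.union_subset_union (ihl.trans Set.subset_union_right) ihr

variable [LinearOrder α]

theorem notMem_leafKeys_of_lt {r : LTree α} {m k : α} (hr : ∀ x ∈ r.keys, m ≤ x)
    (hkm : k < m) : k ∉ r.leafKeys :=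
  fun hk => (hr k (r.leafKeys_subset_keys_s9 hk)).not_gt hkm

theorem notMem_leafKeys_of_le {l : LTree α} {m k : α} (hl : ∀ x ∈ l.keys, x < m)
    (hmk : m ≤ k) : k ∉ l.leafKeys :=
  fun hk => (hl k (l.leafKeys_subset_keys_s9 hk)).not_ge hmk

theorem insert_searchKey_leafKeys_del {t : LTree α} (ht : t.isInternal) (k : α) :
    insert (t.searchKey k) (t.del k).leafKeys = t.leafKeys := by
  fun_induction t.del k with
  | case1 => exact ht.elim
  | case2 m r k hkm a => simp only [searchKey, leafKeys, if_pos hkm, Set.insert_eq]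
  | case3 m r k hkm ml ll lr ih =>
    rw [searchKey, if_pos hkm, leafKeys, leafKeys, ← Set.insert_union, ih trivial]
  | case4 m l k hkm a => simp only [searchKey, leafKeys, if_neg hkm, Set.union_singleton]
  | case5 m l k hkm mr rl rr ih =>
    rw [searchKey, if_neg hkm, leafKeys, leafKeys, ← Set.union_insert, ih trivial]

theorem notMem_leafKeys_del {t : LTree α} (hbst : t.IsBST) (ht : t.isInternal) (k : α) :
    k ∉ (t.del k).leafKeys := by
  fun_induction t.del k with
  | case1 => exact ht.elim
  | case2 m r k hkm a => exact notMem_leafKeys_of_lt hbst.2.1 hkm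
  | case3 m r k hkm ml ll lr ih =>
    simp only [leafKeys, Set.mem_union, not_or]
    exact ⟨ih hbst.2.2.1 trivial, notMem_leafKeys_of_lt hbst.2.1 hkm⟩
  | case4 m l k hkm a => exact notMem_leafKeys_of_le hbst.1 (not_lt.mp hkm)
  | case5 m l k hkm mr rl rr ih =>
    simp only [leafKeys, Set.mem_union, not_or]
    exact ⟨notMem_leafKeys_of_le hbst.1 (not_lt.mp hkm), ih hbst.2.2.2 trivial⟩

end LTree

/-- The delete edit removes exactly the key `k` from the set of leaf keys. -/
theorem stmt9 {α : Type} [LinearOrder α] (T : LTree α) (hT : T.IsBST) (k : α)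
    (hk : T.searchKey k = k) (hint : T.isInternal) :
    (T.del k).leafKeys = T.leafKeys \ {k} := by
  rw [← T.insert_searchKey_leafKeys_del hint k, hk,
    Set.insert_sdiff_self_of_notMem (T.notMem_leafKeys_del hT hint k)]
end

section
/- Let T be a leaf-oriented binary tree over a linearly ordered key type α satisfying the BST property, and let k : α be a key such that the key k' of searchLeaf(T, k) satisfies k' ≠ k. Then for every key m : α, searchDirs(T, m) is a prefix of searchDirs(ins(T, k), m); moreover, if searchDirs(T, m) ≠ searchDirs(T, k), then searchDirs(ins(T, k), m) = searchDirs(T, m). -/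
namespace LTree

variable {α : Type} [LinearOrder α]

theorem searchDirs_prefix_searchDirs_ins (T : LTree α) (k m : α) :
    T.searchDirs m <+: (T.ins k).searchDirs m := by
  induction T with
  | leaf => exact List.nil_prefix
  | node p l r ihl ihr =>
    by_cases hk : k < p <;> by_cases hm : m < p <;> simp [searchDirs, ins, hk, hm, ihl, ihr]

theorem searchDirs_ins_of_searchDirs_ne {T : LTree α} {k m : α}
    (h : T.searchDirs m ≠ T.searchDirs k) : (T.ins k).searchDirs m = T.searchDirs m := by
  induction T with
  | leaf => exact absurd rfl h
  | node p l r ihl ihr =>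
    by_cases hk : k < p <;> by_cases hm : m < p <;> simp [searchDirs, ins, hk, hm] at h ⊢
    · exact ihl h
    · exact ihr h

end LTree

theorem stmt10_general {α : Type} [LinearOrder α] (T : LTree α) (k : α) :
    ∀ m : α,
      T.searchDirs m <+: (T.ins k).searchDirs m ∧
        (T.searchDirs m ≠ T.searchDirs k →
          (T.ins k).searchDirs m = T.searchDirs m) :=
  fun m => ⟨T.searchDirs_prefix_searchDirs_ins k m, LTree.searchDirs_ins_of_searchDirs_ne⟩

/-- After an insert edit, every search path is extended: for every key `m`, the old
search path for `m` is a prefix of the new one; and every search path that differs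
from the search path for the inserted key `k` is unchanged. -/
theorem stmt10 {α : Type} [LinearOrder α] (T : LTree α) (hT : T.IsBST) (k : α)
    (hk : T.searchKey k ≠ k) :
    ∀ m : α,
      T.searchDirs m <+: (T.ins k).searchDirs m ∧
        (T.searchDirs m ≠ T.searchDirs k →
          (T.ins k).searchDirs m = T.searchDirs m) :=
  stmt10_general T k
end

section
/- Let T be a leaf-oriented binary tree over a linearly ordered key type α satisfying the BST property, and let k : α be a key such that the key of searchLeaf(T, k) equals k and the search path for k in T contains at least one internal node; let ds_p denote searchDirs(T, k) with its last element removed (the position of the last internal node p on the search path for k). Then for every key m : α, if ds_p is not a prefix of searchDirs(T, m), then searchDirs(del(T, k), m) = searchDirs(T, m). -/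
/-!
The delete edit rebuilds only the spine of the search path for `k` down to the node `p` it
removes, leaving every node off that spine in place. A search for `m` agrees with the search
for `k` until it first branches away, and it does so before reaching `p` exactly when the
position of `p` is not a prefix of its path; from then on it runs through an untouched subtree.
-/

namespace LTree

variable {α : Type} [LinearOrder α]

theorem searchDirs_node_of_lt {m k : α} (l r : LTree α) (h : k < m) :
    (node m l r).searchDirs k = TDir.left :: l.searchDirs k := if_pos h

theorem searchDirs_node_of_not_lt {m k : α} (l r : LTree α) (h : ¬k < m) :
    (node m l r).searchDirs k = TDir.right :: r.searchDirs k := if_neg h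

theorem searchDirs_node_ne_nil (m : α) (l r : LTree α) (k : α) :
    (node m l r).searchDirs k ≠ [] := by
  unfold searchDirs; split <;> simp

theorem del_node_node_left {m k : α} (ml : α) (ll lr r : LTree α) (h : k < m) :
    (node m (node ml ll lr) r).del k = node m ((node ml ll lr).del k) r := by
  rw [del.eq_def]; simp only [if_pos h]

theorem del_node_node_right {m k : α} (mr : α) (l rl rr : LTree α) (h : ¬k < m) :
    (node m l (node mr rl rr)).del k = node m l ((node mr rl rr).del k) := by
  rw [del.eq_def]; simp only [if_neg h]

theorem searchDirs_del_of_not_prefix :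
    ∀ (t : LTree α) {k m : α}, ¬(t.searchDirs k).dropLast <+: t.searchDirs m →
      (t.del k).searchDirs m = t.searchDirs m
  | leaf _, _, _, _ => rfl
  | node m₀ l r, k, m, h => by
    by_cases hk : k < m₀
    · cases l with
      | leaf _ => simp [searchDirs, hk] at h
      | node ml ll lr =>
        rw [del_node_node_left _ _ _ _ hk]
        rw [searchDirs_node_of_lt _ _ hk,
          List.dropLast_cons_of_ne_nil (searchDirs_node_ne_nil ml ll lr k)] at h
        by_cases hm : m < m₀
        · rw [searchDirs_node_of_lt _ _ hm, List.prefix_cons_inj] at h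
          rw [searchDirs_node_of_lt _ _ hm, searchDirs_node_of_lt _ _ hm,
            searchDirs_del_of_not_prefix _ h]
        · rw [searchDirs_node_of_not_lt _ _ hm, searchDirs_node_of_not_lt _ _ hm]
    · cases r with
      | leaf _ => simp [searchDirs, hk] at h
      | node mr rl rr =>
        rw [del_node_node_right _ _ _ _ hk]
        rw [searchDirs_node_of_not_lt _ _ hk,
          List.dropLast_cons_of_ne_nil (searchDirs_node_ne_nil mr rl rr k)] at h
        by_cases hm : m < m₀
        · rw [searchDirs_node_of_lt _ _ hm, searchDirs_node_of_lt _ _ hm]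
        · rw [searchDirs_node_of_not_lt _ _ hm, List.prefix_cons_inj] at h
          rw [searchDirs_node_of_not_lt _ _ hm, searchDirs_node_of_not_lt _ _ hm,
            searchDirs_del_of_not_prefix _ h]

end LTree

theorem stmt11_general {α : Type} [LinearOrder α] (T : LTree α) (k : α) :
    ∀ m : α,
      ¬ ((T.searchDirs k).dropLast <+: T.searchDirs m) →
        (T.del k).searchDirs m = T.searchDirs m :=
  fun _ => T.searchDirs_del_of_not_prefix

/-- A delete edit changes no search path that avoids the edited position: if the
position of the last internal node on the search path for the deleted key `k`
(namely `(T.searchDirs k).dropLast`) is not a prefix of the search path for `m`,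
then the search path for `m` is unchanged by the delete edit. -/
theorem stmt11 {α : Type} [LinearOrder α] (T : LTree α) (hT : T.IsBST) (k : α)
    (hk : T.searchKey k = k) (hint : T.isInternal) :
    ∀ m : α,
      ¬ ((T.searchDirs k).dropLast <+: T.searchDirs m) →
        (T.del k).searchDirs m = T.searchDirs m :=
  stmt11_general T k
end

section
/- Let w be a versioned tree over a linearly ordered key type α, let ds be a child position in w, let u be the versioned subtree of w at position ds, and let w' be obtained from w by replacing the subtree at position ds with a new versioned node v whose prev pointer is some(u) and whose sequence number is j. Then for every i < j, if the version-i view T_i(w) is defined, then T_i(w') is defined and T_i(w') = T_i(w). -/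
/-- A versioned node: a key, a sequence number, an optional pointer to the previous
version of the node, and (for internal nodes) two children. -/
inductive VNode (α : Type) where
  | vleaf (k : α) (s : ℕ) (p : Option (VNode α))
  | vnode (k : α) (s : ℕ) (p : Option (VNode α)) (l r : VNode α)

namespace VNode

variable {α : Type}

/-- The sequence number of a versioned node. -/
def seq : VNode α → ℕ
  | vleaf _ s _ => s
  | vnode _ s _ _ _ => s

/-- The `prev` pointer of a versioned node. -/
def prev : VNode α → Option (VNode α)
  | vleaf _ _ p => p
  | vnode _ _ p _ _ => p

/-- The version-`i` view of a versioned node: follow `prev` pointers until reaching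
the first node whose sequence number is `≤ i`, and when that node is internal,
recursively take the version-`i` views of its two children.  Returns `none` if some
needed resolution does not exist. -/
def view (i : ℕ) : VNode α → Option (LTree α)
  | vleaf k s p =>
      if s ≤ i then some (LTree.leaf k)
      else
        match p with
        | none => none
        | some v => view i v
  | vnode k s p l r =>
      if s ≤ i then
        match view i l, view i r with
        | some tl, some tr => some (LTree.node k tl tr)
        | _, _ => none
      else
        match p with
        | none => none
        | some v => view i v

/-- The versioned subtree at a child position (a list of left/right directions
followed along the actual child fields, ignoring `prev` pointers), if it exists. -/
def childAt? : VNode α → List TDir → Option (VNode α)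
  | u, [] => some u
  | vleaf _ _ _, _ :: _ => none
  | vnode _ _ _ l _, TDir.left :: ds => l.childAt? ds
  | vnode _ _ _ _ r, TDir.right :: ds => r.childAt? ds

/-- Replace the subtree at a child position by a new versioned node (leaving the
tree unchanged if the position does not exist). -/
def replaceAt : VNode α → List TDir → VNode α → VNode α
  | _, [], v => v
  | vleaf k s p, _ :: _, _ => vleaf k s p
  | vnode k s p l r, TDir.left :: ds, v => vnode k s p (l.replaceAt ds v) r
  | vnode k s p l r, TDir.right :: ds, v => vnode k s p l (r.replaceAt ds v)

theorem view_eq_view_of_prev_eq_some {u v : VNode α} (hprev : v.prev = some u) {i : ℕ}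
    (hi : i < v.seq) : v.view i = u.view i := by
  cases v <;> simp_all [prev, seq, view]

theorem view_vnode_congr (i : ℕ) (k : α) (s : ℕ) (p : Option (VNode α)) {l l' r r' : VNode α}
    (hl : l.view i = l'.view i) (hr : r.view i = r'.view i) :
    (vnode k s p l r).view i = (vnode k s p l' r').view i := by
  cases p <;> simp only [view, hl, hr]

theorem view_replaceAt_eq {i : ℕ} {u v : VNode α} (hv : v.view i = u.view i) :
    ∀ {w : VNode α} {ds : List TDir}, w.childAt? ds = some u → (w.replaceAt ds v).view i = w.view i
  | w, [], hu => by
    rw [childAt?, Option.some.injEq] at hu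
    rwa [replaceAt, hu]
  | vleaf _ _ _, _ :: _, hu => by cases hu
  | vnode _ _ _ _ _, .left :: _, hu => view_vnode_congr _ _ _ _ (view_replaceAt_eq hv hu) rfl
  | vnode _ _ _ _ _, .right :: _, hu => view_vnode_congr _ _ _ _ rfl (view_replaceAt_eq hv hu)

end VNode

theorem stmt14_general {α : Type} (w : VNode α) (ds : List TDir)
    (u v : VNode α) (hu : w.childAt? ds = some u)
    (j : ℕ) (hprev : v.prev = some u) (hseq : v.seq = j)
    (w' : VNode α) (hw' : w' = w.replaceAt ds v) :
    ∀ i < j, ∀ t : LTree α, VNode.view i w = some t → VNode.view i w' = some t := by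
  intro i hi t ht
  subst hw' hseq
  rw [VNode.view_replaceAt_eq (VNode.view_eq_view_of_prev_eq_some hprev hi) hu, ht]

/-- Persistence of old versions: if `w'` is obtained from the versioned tree `w` by
replacing the subtree `u` at a child position `ds` with a new versioned node `v`
whose `prev` pointer is `some u` and whose sequence number is `j`, then for every
`i < j`, whenever the version-`i` view of `w` is defined, the version-`i` view of
`w'` is defined and equal to it. -/
theorem stmt14 {α : Type} [LinearOrder α] (w : VNode α) (ds : List TDir)
    (u v : VNode α) (hu : w.childAt? ds = some u)
    (j : ℕ) (hprev : v.prev = some u) (hseq : v.seq = j)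
    (w' : VNode α) (hw' : w' = w.replaceAt ds v) :
    ∀ i < j, ∀ t : LTree α, VNode.view i w = some t → VNode.view i w' = some t :=
  stmt14_general w ds u v hu j hprev hseq w' hw'
end
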